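/- Simulation property: let S relate extended states to pure states and T relate size-change graphs as defined. (i) If S(e':ρ', e:ρ) and e:ρ ⇓ e₀:ρ₀, G in the pure graph-generating environment semantics, then there exist e₀':ρ₀' and G' with S(e₀':ρ₀', e₀:ρ₀) and T(G', G) such that e':ρ' ⇓ e₀':ρ₀', G' in the extended graph-generating environment semantics. (ii) If S(e':ρ', e:ρ) and e:ρ →x e₀:ρ₀, G with x ∈ {r,d,c}, then there exist e₀':ρ₀', G' and possibly a state s such that either e':ρ' →x e₀':ρ₀', G' or e':ρ' →n s →x e₀':ρ₀', G', with S(e₀':ρ₀', e₀:ρ₀), T(G', G), and in the latter case S(s, e:ρ); moreover in the latter case the composite size-change graph of the double call has the same arcs as G' (since the →n call generates an identity-style graph). -/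

import Mathlib

/- Pure untyped λ-expressions. -/
inductive Exp : Type
  | var : String → Exp
  | app : Exp → Exp → Exp
  | lam : String → Exp → Exp
deriving DecidableEq

namespace Exp
/-- Free variables of a pure λ-expression. -/
def fv : Exp → Finset String
  | var x => {x}
  | app e1 e2 => fv e1 ∪ fv e2
  | lam x e => fv e \ {x}
end Exp

/- Γ-extended λ-expressions: variables, nonterminals, applications and
abstractions. -/
inductive ExpE : Type
  | var : String → ExpE
  | app : ExpE → ExpE → ExpE
  | lam : String → ExpE → ExpE
  | nt : String → ExpE
deriving DecidableEq

/-- A λ-regular grammar `Γ = (N, Π)`: a finite set of nonterminals and a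
finite set of productions `A ::= e`; we assume (as in the paper) that no
production has the form `A ::= A'` with `A'` a nonterminal. -/
structure Grammar where
  N : Set String
  prods : Set (String × ExpE)
  finN : N.Finite
  finProds : prods.Finite
  prods_mem : ∀ p ∈ prods, p.1 ∈ N
  no_nt_prod : ∀ p ∈ prods, ∀ A : String, p.2 ≠ ExpE.nt A

/-- The derivation relation `e ⇒*_Γ t`, relating Γ-extended expressions to the
pure λ-expressions obtained by replacing every nonterminal occurrence
(independently) by a λ-expression it derives via the productions. -/
inductive Deriv (Γ : Grammar) : ExpE → Exp → Prop
  | var (x : String) : Deriv Γ (ExpE.var x) (Exp.var x)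
  | app {a1 a2 : ExpE} {t1 t2 : Exp} :
      Deriv Γ a1 t1 → Deriv Γ a2 t2 → Deriv Γ (ExpE.app a1 a2) (Exp.app t1 t2)
  | lam {x : String} {a : ExpE} {t : Exp} :
      Deriv Γ a t → Deriv Γ (ExpE.lam x a) (Exp.lam x t)
  | nt {A : String} {e : ExpE} {t : Exp} :
      (A, e) ∈ Γ.prods → Deriv Γ e t → Deriv Γ (ExpE.nt A) t

/-- Free variables of a Γ-extended expression:
`fv(e) = { x | ∃t, e ⇒*_Γ t and x ∈ fv(t) }`. -/
def fvE (Γ : Grammar) (e : ExpE) : Set String :=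
  {x | ∃ t, Deriv Γ e t ∧ x ∈ Exp.fv t}
/- Values (closures), environments and states of the (pure)
environment-based semantics. -/
inductive Val : Type
  | clos : String → Exp → (String → Option Val) → Val

abbrev Env := String → Option Val
abbrev State := Exp × Env

/-- A value `λx.e:ρ` viewed as a state. -/
def Val.toState : Val → State
  | .clos x e ρ => (Exp.lam x e, ρ)

/-- The λ-expression component of a value. -/
def Val.toExp : Val → Exp
  | .clos x e _ => Exp.lam x e

def Env.update (ρ : Env) (x : String) (v : Val) : Env :=
  fun y => if y = x then some v else ρ y

def Env.empty : Env := fun _ => none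
/-- Arc labels: `=` (eq) and `↓` (dec). -/
inductive Lab : Type
  | eq : Lab
  | dec : Lab
deriving DecidableEq

/-- Name paths; here the nodes of generated size-change graphs are `ε = []`
or single variables `[y]`. -/
abbrev NP := List String
abbrev Arc := NP × Lab × NP
abbrev ArcSet := Set Arc

/-- `id= = {ε =→ ε} ∪ {y =→ y | y ∈ s}`. -/
def idEqS (s : Set String) : ArcSet :=
  {a | a = ([], Lab.eq, []) ∨ ∃ y ∈ s, a = ([y], Lab.eq, [y])}

/-- `id↓ = {ε ↓→ ε} ∪ {y =→ y | y ∈ s}`. -/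
def idDecS (s : Set String) : ArcSet :=
  {a | a = ([], Lab.dec, []) ∨ ∃ y ∈ s, a = ([y], Lab.eq, [y])}

/-- The graph `{x =→ ε} ∪ {x ↓→ y | y ∈ s}` of the variable rule. -/
def varGraphS (x : String) (s : Set String) : ArcSet :=
  {a | a = ([x], Lab.eq, []) ∨ ∃ y ∈ s, a = ([x], Lab.dec, [y])}

/-- `G₁^{-ε/λx.e₀}`: keep arcs between variables, replace `ε r→ z` (`z` a
variable) by `ε ↓→ z`, and, when `x ∉ fv(e₀)`, additionally replace each
arc `p r→ ε` by `p ↓→ ε`.  (`fve0` is `fv(e₀)`.) -/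
def GminusS (x : String) (fve0 : Set String) (G1 : ArcSet) : ArcSet :=
  {a | (∃ (y : String) (r : Lab) (z : String), a = ([y], r, [z]) ∧ ([y], r, [z]) ∈ G1) ∨
       (∃ z : String, a = (([] : NP), Lab.dec, [z]) ∧ ∃ r, (([] : NP), r, [z]) ∈ G1) ∨
       (x ∉ fve0 ∧ ∃ p : NP, a = (p, Lab.dec, ([] : NP)) ∧ ∃ r, (p, r, ([] : NP)) ∈ G1)}

/-- `G₂^{ε↦x}`: `y r→ x` for each `y r→ ε ∈ G₂`, and `ε ↓→ x` for each
`ε r→ ε ∈ G₂`. -/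
def GepsS (x : String) (G2 : ArcSet) : ArcSet :=
  {a | (∃ (y : String) (r : Lab), a = ([y], r, [x]) ∧ ([y], r, ([] : NP)) ∈ G2) ∨
       (a = (([] : NP), Lab.dec, [x]) ∧ ∃ r, (([] : NP), r, ([] : NP)) ∈ G2)}

/-- `∪_{e₀}`: union restricted to arcs whose target is in `fv(e₀) ∪ {ε}`. -/
def unionRS (fve0 : Set String) (A B : ArcSet) : ArcSet :=
  {a | a ∈ A ∪ B ∧ (a.2.2 = ([] : NP) ∨ ∃ y ∈ fve0, a.2.2 = [y])}

/-- The label set `R(x,z)` used in graph composition. -/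
def labelsA (G1 G2 : ArcSet) (x z : NP) : Set Lab :=
  {r | ∃ y s, ((x, r, y) ∈ G1 ∧ (y, s, z) ∈ G2) ∨
              ((x, s, y) ∈ G1 ∧ (y, r, z) ∈ G2)}

/-- Composition `G₁;G₂` of size-change graphs (as arc sets): `x ↓→ z` whenever
`↓ ∈ R(x,z)`, and `x =→ z` whenever `R(x,z) = {=}`. -/
def compA (G1 G2 : ArcSet) : ArcSet :=
  {a | (∃ x z, a = (x, Lab.dec, z) ∧ Lab.dec ∈ labelsA G1 G2 x z) ∨
       (∃ x z, a = (x, Lab.eq, z) ∧ labelsA G1 G2 x z = {Lab.eq})}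
/- The graph-generating environment semantics:
judgements `e:ρ ⇓ v, G` and `e:ρ →x e':ρ', G` (x ∈ {r,d,c}). -/
mutual
  inductive EvalG : State → Val → ArcSet → Prop
    | value (x : String) (e : Exp) (ρ : Env) :
        EvalG (Exp.lam x e, ρ) (Val.clos x e ρ) (idEqS ↑(Exp.lam x e).fv)
    | var {ρ : Env} {x : String} {v : Val} :
        ρ x = some v → EvalG (Exp.var x, ρ) v (varGraphS x ↑v.toExp.fv)
    | apply {s s' : State} {v : Val} {G' G : ArcSet} :
        CallGc s s' G' → EvalG s' v G → EvalG s v (compA G' G)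
  inductive CallGc : State → State → ArcSet → Prop
    | call {e1 e2 : Exp} {ρ ρ0 : Env} {x : String} {e0 : Exp} {v2 : Val}
        {G1 G2 : ArcSet} :
        EvalG (e1, ρ) (Val.clos x e0 ρ0) G1 → EvalG (e2, ρ) v2 G2 →
        CallGc (Exp.app e1 e2, ρ) (e0, Env.update ρ0 x v2)
          (unionRS ↑e0.fv (GminusS x ↑e0.fv G1) (GepsS x G2))
end

inductive CallGr : State → State → ArcSet → Prop
  | oper (e1 e2 : Exp) (ρ : Env) :
      CallGr (Exp.app e1 e2, ρ) (e1, ρ) (idDecS ↑e1.fv)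

inductive CallGd : State → State → ArcSet → Prop
  | opnd {e1 : Exp} {ρ : Env} {v1 : Val} {G1 : ArcSet} (e2 : Exp) :
      EvalG (e1, ρ) v1 G1 → CallGd (Exp.app e1 e2, ρ) (e2, ρ) (idDecS ↑e2.fv)

/-- The graph-generating call relation (union of `→r`, `→d`, `→c`). -/
def CallGAny (s s' : State) (G : ArcSet) : Prop :=
  CallGr s s' G ∨ CallGd s s' G ∨ CallGc s s' G
/- Values, environments and states of the Γ-extended environment-based
semantics. -/
inductive ValE : Type
  | clos : String → ExpE → (String → Option ValE) → ValE

abbrev EnvE := String → Option ValE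
abbrev StateE := ExpE × EnvE

/-- An extended value `λx.e:ρ` viewed as an extended state. -/
def ValE.toState : ValE → StateE
  | .clos x e ρ => (ExpE.lam x e, ρ)

/-- The extended-λ-expression component of an extended value. -/
def ValE.toExp : ValE → ExpE
  | .clos x e _ => ExpE.lam x e

def EnvE.update (ρ : EnvE) (x : String) (v : ValE) : EnvE :=
  fun y => if y = x then some v else ρ y

def EnvE.empty : EnvE := fun _ => none
/- The extended graph-generating environment semantics (on Γ-extended
expressions), with the (GramG) rule `A:ρ →n e:ρ` for productions `A ::= e`,
and the (ResultG) rule composing graphs along `→c` and `→n` calls. -/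
inductive CallXn (Γ : Grammar) : StateE → StateE → ArcSet → Prop
  | gram {A : String} {e : ExpE} (ρ : EnvE) :
      (A, e) ∈ Γ.prods → CallXn Γ (ExpE.nt A, ρ) (e, ρ) (idEqS (fvE Γ e))

mutual
  inductive EvalX (Γ : Grammar) : StateE → ValE → ArcSet → Prop
    | value (x : String) (e : ExpE) (ρ : EnvE) :
        EvalX Γ (ExpE.lam x e, ρ) (ValE.clos x e ρ) (idEqS (fvE Γ (ExpE.lam x e)))
    | var {ρ : EnvE} {x : String} {v : ValE} :
        ρ x = some v → EvalX Γ (ExpE.var x, ρ) v (varGraphS x (fvE Γ v.toExp))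
    | resultC {s s' : StateE} {v : ValE} {G' G : ArcSet} :
        CallXc Γ s s' G' → EvalX Γ s' v G → EvalX Γ s v (compA G' G)
    | resultN {s s' : StateE} {v : ValE} {G' G : ArcSet} :
        CallXn Γ s s' G' → EvalX Γ s' v G → EvalX Γ s v (compA G' G)
  inductive CallXc (Γ : Grammar) : StateE → StateE → ArcSet → Prop
    | call {e1 e2 : ExpE} {ρ ρ0 : EnvE} {x : String} {e0 : ExpE} {v2 : ValE}
        {G1 G2 : ArcSet} :
        EvalX Γ (e1, ρ) (ValE.clos x e0 ρ0) G1 → EvalX Γ (e2, ρ) v2 G2 →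
        CallXc Γ (ExpE.app e1 e2, ρ) (e0, EnvE.update ρ0 x v2)
          (unionRS (fvE Γ e0) (GminusS x (fvE Γ e0) G1) (GepsS x G2))
end

inductive CallXr (Γ : Grammar) : StateE → StateE → ArcSet → Prop
  | oper (e1 e2 : ExpE) (ρ : EnvE) :
      CallXr Γ (ExpE.app e1 e2, ρ) (e1, ρ) (idDecS (fvE Γ e1))

inductive CallXd (Γ : Grammar) : StateE → StateE → ArcSet → Prop
  | opnd {e1 : ExpE} {ρ : EnvE} {v1 : ValE} {G1 : ArcSet} (e2 : ExpE) :
      EvalX Γ (e1, ρ) v1 G1 → CallXd Γ (ExpE.app e1 e2, ρ) (e2, ρ) (idDecS (fvE Γ e2))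

/-- Kinds of calls: Operator (`r`), Operand (`d`), Call (`c`). -/
inductive CKind : Type
  | r : CKind
  | d : CKind
  | c : CKind

/-- The pure graph-generating call relation `→x`, indexed by kind. -/
def CallGk : CKind → State → State → ArcSet → Prop
  | CKind.r => CallGr
  | CKind.d => CallGd
  | CKind.c => CallGc

/-- The extended graph-generating call relation `→x`, indexed by kind
(`→n` is `CallXn`). -/
def CallXk (Γ : Grammar) : CKind → StateE → StateE → ArcSet → Prop
  | CKind.r => CallXr Γ
  | CKind.d => CallXd Γ
  | CKind.c => CallXc Γ

/-- The relation `S` between extended states and pure states: the smallest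
relation with `S(e':ρ', e:ρ)` whenever `e' ⇒*_Γ e` and `S(ρ'(x), ρ(x))` for
all `x ∈ fv(e)`. -/
inductive SRel (Γ : Grammar) : StateE → State → Prop
  | mk {e' : ExpE} {e : Exp} {ρ' : EnvE} {ρ : Env} :
      Deriv Γ e' e →
      (∀ x ∈ Exp.fv e, (ρ' x).isSome ∧ (ρ x).isSome) →
      (∀ x ∈ Exp.fv e, ∀ (v' : ValE) (v : Val),
        ρ' x = some v' → ρ x = some v → SRel Γ v'.toState v.toState) →
      SRel Γ (e', ρ') (e, ρ)

/-- The node set `{ε} ∪ { [x] | x ∈ s }` determined by a set of variables. -/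
def nps (s : Set String) : Set NP :=
  insert ([] : NP) {p | ∃ x ∈ s, p = [x]}

/-- The relation `T(G',G)` between size-change graphs (with the indicated
source and target sets): `source(G') ⊇ source(G)`, `target(G') ⊇ target(G)`,
the restriction of `G'` to `source(G)` and `target(G)` is a subset of `G`,
every `z ∈ source(G') ∖ source(G)` has no arc from `z` in `G'` except
possibly `z =→ z`, and whenever `z =→ z ∈ G'` (for such `z`), `z ∉ target(G)`. -/
def TRel (src' tgt' src tgt : Set NP) (G' G : ArcSet) : Prop :=
  src ⊆ src' ∧ tgt ⊆ tgt' ∧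
  (∀ a ∈ G', a.1 ∈ src → a.2.2 ∈ tgt → a ∈ G) ∧
  (∀ z ∈ src', z ∉ src →
    (∀ a ∈ G', a.1 = z → a = (z, Lab.eq, z)) ∧
    ((z, Lab.eq, z) ∈ G' → z ∉ tgt))

/-!
The simulation is proved by mutual induction on pure evaluations and calls, carrying along the
invariant that every extended graph has its sources among the free variables of its source
expression (and `ε`), its targets among those of its target expression, and never both an `=`
and a `↓` arc between the same two nodes. A nonterminal is handled by one (GramG) step; its
identity graph leaves the graph that follows unchanged, thanks to that invariant.

`T` is preserved by the (CallG) construction and by composition. Both rest on the observation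
that an arc of `G'` into `target(G)` is already an arc of `G`. For composition one also needs
that pure graphs are sound for a size measure on states (the size of the expression plus the
sizes of the closures bound to its free variables): then no pure `=`-path and `↓`-path join the
same two nodes, so an `=` arc of the extended composite is an `=` arc of the pure one.
-/

lemma mem_nps {s : Set String} {p : NP} : p ∈ nps s ↔ p = [] ∨ ∃ x ∈ s, p = [x] := Iff.rfl

@[simp] lemma nil_mem_nps (s : Set String) : ([] : NP) ∈ nps s := Set.mem_insert _ _

@[simp] lemma singleton_mem_nps {s : Set String} {x : String} : [x] ∈ nps s ↔ x ∈ s := by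
  simp [mem_nps]

lemma nps_mono {s t : Set String} (h : s ⊆ t) : nps s ⊆ nps t := by
  rintro p (rfl | ⟨x, hx, rfl⟩)
  · exact nil_mem_nps t
  · exact singleton_mem_nps.2 (h hx)

lemma nps_subset_nps {s t : Set String} : nps s ⊆ nps t ↔ s ⊆ t :=
  ⟨fun h _ hx => singleton_mem_nps.1 (h (singleton_mem_nps.2 hx)), nps_mono⟩

section FreeVariables

variable {Γ : Grammar}

lemma Deriv.fv_subset_fvE {e' : ExpE} {e : Exp} (h : Deriv Γ e' e) : ↑e.fv ⊆ fvE Γ e' :=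
  fun _ hx => ⟨e, h, hx⟩

lemma notMem_fvE_lam (x : String) (a : ExpE) : x ∉ fvE Γ (.lam x a) := by
  rintro ⟨t, ht, hx⟩
  cases ht with
  | lam => simp [Exp.fv] at hx

lemma fvE_app {a1 a2 : ExpE} {t1 t2 : Exp} (h1 : Deriv Γ a1 t1) (h2 : Deriv Γ a2 t2) :
    fvE Γ (.app a1 a2) = fvE Γ a1 ∪ fvE Γ a2 := by
  ext x
  constructor
  · rintro ⟨t, ht, hx⟩
    cases ht with
    | app hl hr => exact (Finset.mem_union.1 hx).imp (⟨_, hl, ·⟩) (⟨_, hr, ·⟩)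
  · rintro (⟨t, ht, hx⟩ | ⟨t, ht, hx⟩)
    exacts [⟨_, .app ht h2, Finset.mem_union_left _ hx⟩,
      ⟨_, .app h1 ht, Finset.mem_union_right _ hx⟩]

lemma fvE_subset_fvE_nt {A : String} {b : ExpE} (h : (A, b) ∈ Γ.prods) :
    fvE Γ b ⊆ fvE Γ (.nt A) :=
  fun _ ⟨t, ht, hx⟩ => ⟨t, .nt h ht, hx⟩

end FreeVariables

def SourcesIn (G : ArcSet) (S : Set NP) : Prop := ∀ a ∈ G, a.1 ∈ S

def TargetsIn (G : ArcSet) (T : Set NP) : Prop := ∀ a ∈ G, a.2.2 ∈ T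

def NoConflict (G : ArcSet) : Prop := ∀ p q, (p, Lab.eq, q) ∈ G → (p, Lab.dec, q) ∉ G

abbrev callGraph (x : String) (s : Set String) (G₁ G₂ : ArcSet) : ArcSet :=
  unionRS s (GminusS x s G₁) (GepsS x G₂)

lemma SourcesIn.mono {G : ArcSet} {S S' : Set NP} (h : SourcesIn G S) (hS : S ⊆ S') :
    SourcesIn G S' :=
  fun a ha => hS (h a ha)

section ArcSets

variable {s : Set String} {x : String} {p q y : NP} {r r₁ r₂ : Lab}
  {G G₁ G₂ A B H : ArcSet}

@[simp] lemma mem_idEqS : (p, r, q) ∈ idEqS s ↔ r = .eq ∧ q = p ∧ p ∈ nps s := by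
  simp only [idEqS, Set.mem_ofPred_eq, mem_nps, Prod.mk.injEq]
  aesop

@[simp] lemma mem_idDecS :
    (p, r, q) ∈ idDecS s ↔ q = p ∧ (p = [] ∧ r = .dec ∨ ∃ z ∈ s, p = [z] ∧ r = .eq) := by
  simp only [idDecS, Set.mem_ofPred_eq, Prod.mk.injEq]
  aesop

@[simp] lemma mem_varGraphS :
    (p, r, q) ∈ varGraphS x s ↔ p = [x] ∧ (r = .eq ∧ q = [] ∨ r = .dec ∧ ∃ z ∈ s, q = [z]) := by
  simp only [varGraphS, Set.mem_ofPred_eq, Prod.mk.injEq]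
  aesop

lemma mem_GminusS :
    (p, r, q) ∈ GminusS x s G ↔
      (∃ y z, p = [y] ∧ q = [z] ∧ (p, r, q) ∈ G) ∨
      (p = [] ∧ r = .dec ∧ (∃ z, q = [z]) ∧ ∃ r', ([], r', q) ∈ G) ∨
      (x ∉ s ∧ r = .dec ∧ q = [] ∧ ∃ r', (p, r', []) ∈ G) := by
  simp only [GminusS, Set.mem_ofPred_eq, Prod.mk.injEq]
  aesop

lemma mem_GepsS :
    (p, r, q) ∈ GepsS x G ↔
      q = [x] ∧
        ((∃ y, p = [y] ∧ (p, r, []) ∈ G) ∨ (p = [] ∧ r = .dec ∧ ∃ r', ([], r', []) ∈ G)) := by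
  simp only [GepsS, Set.mem_ofPred_eq, Prod.mk.injEq]
  aesop

lemma targetsIn_unionRS : TargetsIn (unionRS s A B) (nps s) := fun _ ha => ha.2

lemma mem_labelsA_of_left (h₁ : (p, r₁, y) ∈ G₁) (h₂ : (y, r₂, q) ∈ G₂) :
    r₁ ∈ labelsA G₁ G₂ p q :=
  ⟨y, r₂, .inl ⟨h₁, h₂⟩⟩

lemma mem_labelsA_of_right (h₁ : (p, r₁, y) ∈ G₁) (h₂ : (y, r₂, q) ∈ G₂) :
    r₂ ∈ labelsA G₁ G₂ p q :=
  ⟨y, r₁, .inr ⟨h₁, h₂⟩⟩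

lemma exists_path_of_mem_labelsA (h : r ∈ labelsA G₁ G₂ p q) :
    ∃ r₁ y r₂, (p, r₁, y) ∈ G₁ ∧ (y, r₂, q) ∈ G₂ ∧ (r = r₁ ∨ r = r₂) := by
  obtain ⟨y, s, ⟨h₁, h₂⟩ | ⟨h₁, h₂⟩⟩ := h
  exacts [⟨_, _, _, h₁, h₂, .inl rfl⟩, ⟨_, _, _, h₁, h₂, .inr rfl⟩]

lemma eq_and_eq_of_labelsA_eq (h : labelsA G₁ G₂ p q = {.eq})
    (h₁ : (p, r₁, y) ∈ G₁) (h₂ : (y, r₂, q) ∈ G₂) : r₁ = .eq ∧ r₂ = .eq := by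
  have hl := mem_labelsA_of_left h₁ h₂
  have hr := mem_labelsA_of_right h₁ h₂
  rw [h] at hl hr
  exact ⟨hl, hr⟩

@[simp] lemma dec_mem_compA : (p, .dec, q) ∈ compA G₁ G₂ ↔ .dec ∈ labelsA G₁ G₂ p q := by
  simp [compA]

@[simp] lemma eq_mem_compA : (p, .eq, q) ∈ compA G₁ G₂ ↔ labelsA G₁ G₂ p q = {.eq} := by
  simp [compA]

lemma mem_labelsA_of_mem_compA (h : (p, r, q) ∈ compA G₁ G₂) : r ∈ labelsA G₁ G₂ p q := by
  cases r
  · rw [eq_mem_compA.1 h]; rfl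
  · exact dec_mem_compA.1 h

lemma exists_path_of_mem_compA (h : (p, r, q) ∈ compA G₁ G₂) :
    ∃ r₁ y r₂, (p, r₁, y) ∈ G₁ ∧ (y, r₂, q) ∈ G₂ ∧ (r = r₁ ∨ r = r₂) :=
  exists_path_of_mem_labelsA (mem_labelsA_of_mem_compA h)

lemma SourcesIn.compA {S : Set NP} (h : SourcesIn G₁ S) : SourcesIn (compA G₁ G₂) S := by
  rintro ⟨p, r, q⟩ ha
  obtain ⟨r₁, y, -, h₁, -⟩ := exists_path_of_mem_compA ha
  exact h (p, r₁, y) h₁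

lemma TargetsIn.compA {T : Set NP} (h : TargetsIn G₂ T) : TargetsIn (compA G₁ G₂) T := by
  rintro ⟨p, r, q⟩ ha
  obtain ⟨-, y, r₂, -, h₂, -⟩ := exists_path_of_mem_compA ha
  exact h (y, r₂, q) h₂

lemma noConflict_compA (G₁ G₂ : ArcSet) : NoConflict (compA G₁ G₂) := by
  intro p q he hd
  have := dec_mem_compA.1 hd
  rw [eq_mem_compA.1 he] at this
  exact Lab.noConfusion this

/-- The paths through the identity are `p =→ p r→ q`; `NoConflict` rules out the `=`/`↓` clash
that composition would resolve to `↓`. -/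
lemma compA_idEqS (hs : SourcesIn H (nps s)) (hH : NoConflict H) : compA (idEqS s) H = H := by
  have labels : ∀ p q r, r ∈ labelsA (idEqS s) H p q ↔
      (∃ r', (p, r', q) ∈ H) ∧ (r = .eq ∨ (p, r, q) ∈ H) := by
    intro p q r
    constructor
    · intro h
      obtain ⟨r₁, y, r₂, h₁, h₂, hr⟩ := exists_path_of_mem_labelsA h
      obtain ⟨rfl, rfl, -⟩ := mem_idEqS.1 h₁
      refine ⟨⟨_, h₂⟩, ?_⟩
      rcases hr with rfl | rfl
      exacts [.inl rfl, .inr h₂]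
    · rintro ⟨⟨r', h'⟩, rfl | h⟩
      · exact mem_labelsA_of_left (mem_idEqS.2 ⟨rfl, rfl, hs _ h'⟩) h'
      · exact mem_labelsA_of_right (mem_idEqS.2 ⟨rfl, rfl, hs _ h⟩) h
  ext ⟨p, r, q⟩
  cases r
  · rw [eq_mem_compA, Set.eq_singleton_iff_unique_mem, labels]
    constructor
    · rintro ⟨⟨⟨r', h'⟩, -⟩, hdec⟩
      cases r'
      · exact h'
      · exact absurd (hdec .dec ((labels _ _ _).2 ⟨⟨_, h'⟩, .inr h'⟩)) Lab.noConfusion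
    · intro h
      refine ⟨⟨⟨_, h⟩, .inl rfl⟩, fun r hr => ?_⟩
      cases r
      · rfl
      · exact absurd ((labels _ _ _).1 hr).2 (by simpa using hH p q h)
  · rw [dec_mem_compA, labels]
    exact ⟨fun h => h.2.resolve_left Lab.noConfusion, fun h => ⟨⟨_, h⟩, .inr h⟩⟩

end ArcSets

section WellFormedness

variable {s : Set String} {x y z : String} {p q : NP} {r : Lab} {S : Set NP} {G₁ G₂ : ArcSet}

lemma sourcesIn_idEqS (s : Set String) : SourcesIn (idEqS s) (nps s) :=
  fun ⟨_, _, _⟩ ha => (mem_idEqS.1 ha).2.2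

lemma targetsIn_idEqS (s : Set String) : TargetsIn (idEqS s) (nps s) := by
  rintro ⟨p, r, q⟩ ha
  obtain ⟨-, rfl, hp⟩ := mem_idEqS.1 ha
  exact hp

lemma noConflict_idEqS (s : Set String) : NoConflict (idEqS s) :=
  fun _ _ _ hd => Lab.noConfusion (mem_idEqS.1 hd).1

lemma sourcesIn_idDecS (s : Set String) : SourcesIn (idDecS s) (nps s) := by
  rintro ⟨p, r, q⟩ ha
  obtain ⟨-, ⟨rfl, -⟩ | ⟨y, hy, rfl, -⟩⟩ := mem_idDecS.1 ha
  exacts [nil_mem_nps s, singleton_mem_nps.2 hy]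

lemma targetsIn_idDecS (s : Set String) : TargetsIn (idDecS s) (nps s) := by
  rintro ⟨p, r, q⟩ ha
  obtain ⟨rfl, -⟩ := mem_idDecS.1 ha
  exact sourcesIn_idDecS s _ ha

lemma noConflict_idDecS (s : Set String) : NoConflict (idDecS s) := by
  intro p q he hd
  obtain ⟨-, ⟨-, h⟩ | -⟩ := mem_idDecS.1 he
  · exact Lab.noConfusion h
  obtain ⟨-, ⟨rfl, -⟩ | ⟨_, -, -, h⟩⟩ := mem_idDecS.1 hd
  · simp at he
  · exact Lab.noConfusion h

lemma sourcesIn_varGraphS {s' : Set String} (hx : x ∈ s') : SourcesIn (varGraphS x s) (nps s') := by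
  rintro ⟨p, r, q⟩ ha
  obtain ⟨rfl, -⟩ := mem_varGraphS.1 ha
  exact singleton_mem_nps.2 hx

lemma targetsIn_varGraphS (x : String) (s : Set String) : TargetsIn (varGraphS x s) (nps s) := by
  rintro ⟨p, r, q⟩ ha
  obtain ⟨-, ⟨-, rfl⟩ | ⟨-, z, hz, rfl⟩⟩ := mem_varGraphS.1 ha
  exacts [nil_mem_nps s, singleton_mem_nps.2 hz]

lemma noConflict_varGraphS (x : String) (s : Set String) : NoConflict (varGraphS x s) := by
  intro p q he hd
  obtain ⟨-, ⟨-, rfl⟩ | ⟨h, -⟩⟩ := mem_varGraphS.1 he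
  · obtain ⟨-, ⟨h, -⟩ | ⟨-, z, -, h⟩⟩ := mem_varGraphS.1 hd
    exacts [Lab.noConfusion h, List.cons_ne_nil _ _ h.symm]
  · exact Lab.noConfusion h

lemma sourcesIn_callGraph (h₁ : SourcesIn G₁ S) (h₂ : SourcesIn G₂ S) (hε : [] ∈ S) :
    SourcesIn (callGraph x s G₁ G₂) S := by
  rintro ⟨p, r, q⟩ ⟨hA | hB, -⟩
  · rcases mem_GminusS.1 hA with ⟨_, _, -, -, h⟩ | ⟨rfl, -⟩ | ⟨-, -, -, _, h⟩
    exacts [h₁ _ h, hε, h₁ (p, _, []) h]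
  · obtain ⟨-, ⟨_, -, h⟩ | ⟨rfl, -⟩⟩ := mem_GepsS.1 hB
    exacts [h₂ (p, r, []) h, hε]

lemma eq_singletons_of_eq_mem_callGraph (h : (p, .eq, q) ∈ callGraph x s G₁ G₂) :
    ∃ y z, p = [y] ∧ q = [z] := by
  obtain ⟨hA | hB, -⟩ := h
  · rcases mem_GminusS.1 hA with ⟨y, z, rfl, rfl, -⟩ | ⟨-, h, -⟩ | ⟨-, h, -⟩
    exacts [⟨y, z, rfl, rfl⟩, Lab.noConfusion h, Lab.noConfusion h]
  · obtain ⟨rfl, ⟨y, rfl, -⟩ | ⟨-, h, -⟩⟩ := mem_GepsS.1 hB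
    exacts [⟨y, x, rfl, rfl⟩, Lab.noConfusion h]

lemma mem_or_of_singletons_mem_callGraph (h : ([y], r, [z]) ∈ callGraph x s G₁ G₂) :
    ([y], r, [z]) ∈ G₁ ∨ z = x ∧ ([y], r, []) ∈ G₂ := by
  obtain ⟨hA | hB, -⟩ := h
  · rcases mem_GminusS.1 hA with ⟨-, -, -, -, h⟩ | ⟨h, -⟩ | ⟨-, -, h, -⟩
    exacts [.inl h, absurd h (List.cons_ne_nil _ _), absurd h (List.cons_ne_nil _ _)]
  · obtain ⟨h, ⟨-, -, h'⟩ | ⟨h', -⟩⟩ := mem_GepsS.1 hB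
    exacts [.inr ⟨List.singleton_inj.1 h, h'⟩, absurd h' (List.cons_ne_nil _ _)]

lemma mem_callGraph_of_mem {G₁' G₂' : ArcSet} {s' : Set String} (hs : s ⊆ s')
    (h₁ : ∀ {p r q}, (p, r, q) ∈ G₁' → q ∈ nps s → (p, r, q) ∈ G₁)
    (h₂ : ∀ {p r}, (p, r, []) ∈ G₂' → (p, r, []) ∈ G₂)
    (ha : (p, r, q) ∈ callGraph x s' G₁' G₂') (hq : q ∈ nps s) :
    (p, r, q) ∈ callGraph x s G₁ G₂ := by
  refine ⟨?_, hq⟩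
  obtain ⟨hA | hB, -⟩ := ha
  · left
    rcases mem_GminusS.1 hA with ⟨y, z, rfl, rfl, h⟩ | ⟨rfl, rfl, hz, r', h⟩ |
      ⟨hxs, rfl, rfl, r', h⟩
    · exact mem_GminusS.2 (.inl ⟨y, z, rfl, rfl, h₁ h hq⟩)
    · exact mem_GminusS.2 (.inr (.inl ⟨rfl, rfl, hz, r', h₁ h hq⟩))
    · exact mem_GminusS.2 (.inr (.inr ⟨fun h => hxs (hs h), rfl, rfl, r', h₁ h hq⟩))
  · right
    obtain ⟨rfl, ⟨y, rfl, h⟩ | ⟨rfl, rfl, r', h⟩⟩ := mem_GepsS.1 hB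
    exacts [mem_GepsS.2 ⟨rfl, .inl ⟨y, rfl, h₂ h⟩⟩, mem_GepsS.2 ⟨rfl, .inr ⟨rfl, rfl, r', h₂ h⟩⟩]

lemma loop_of_mem_callGraph {w : String} (h₁ : ∀ {r q}, ([w], r, q) ∈ G₁ → r = .eq ∧ q = [w])
    (h₂ : ∀ {r}, ([w], r, []) ∉ G₂) (ha : ([w], r, q) ∈ callGraph x s G₁ G₂) :
    r = .eq ∧ q = [w] ∧ ([w], .eq, [w]) ∈ G₁ := by
  obtain ⟨hA | hB, -⟩ := ha
  · rcases mem_GminusS.1 hA with ⟨-, -, -, -, h⟩ | ⟨h, -⟩ | ⟨-, -, rfl, _, h⟩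
    · obtain ⟨rfl, rfl⟩ := h₁ h
      exact ⟨rfl, rfl, h⟩
    · exact absurd h (List.cons_ne_nil _ _)
    · exact absurd (h₁ h).2 (List.cons_ne_nil _ _).symm
  · obtain ⟨-, ⟨-, -, h⟩ | ⟨h, -⟩⟩ := mem_GepsS.1 hB
    exacts [absurd h h₂, absurd h (List.cons_ne_nil _ _)]

/-- The only arcs of a call graph that inherit their label are those between variables; two
such arcs with the same ends come from the same graph, since `[x]` is not a target of `G₁`. -/
lemma noConflict_callGraph {T : Set NP} (ht₁ : TargetsIn G₁ T) (hx : [x] ∉ T)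
    (c₁ : NoConflict G₁) (c₂ : NoConflict G₂) : NoConflict (callGraph x s G₁ G₂) := by
  intro p q he hd
  obtain ⟨y, z, rfl, rfl⟩ := eq_singletons_of_eq_mem_callGraph he
  rcases mem_or_of_singletons_mem_callGraph he with he₁ | ⟨rfl, he₂⟩ <;>
    rcases mem_or_of_singletons_mem_callGraph hd with hd₁ | ⟨hzx, hd₂⟩
  · exact c₁ _ _ he₁ hd₁
  · exact hx (hzx ▸ ht₁ _ he₁)
  · exact hx (ht₁ _ hd₁)
  · exact c₂ _ _ he₂ hd₂

end WellFormedness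

def Exp.size : Exp → ℕ
  | .var _ => 1
  | .app e1 e2 => e1.size + e2.size + 1
  | .lam _ e => e.size + 1

lemma Exp.size_pos (e : Exp) : 0 < e.size := by
  cases e <;> simp [Exp.size]

/-- The size of a closure: its code plus, recursively, the closures bound to its free
variables. -/
noncomputable def Val.measure : Val → ℕ :=
  Val.rec (motive_1 := fun _ => ℕ) (motive_2 := fun _ => ℕ)
    (fun x e _ ih => (Exp.lam x e).size + ∑ y ∈ (Exp.lam x e).fv, ih y) 0 (fun _ ih => ih)

noncomputable def Val.optMeasure : Option Val → ℕ
  | some v => v.measure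
  | none => 0

noncomputable def stateMeasure (s : State) : ℕ :=
  s.1.size + ∑ y ∈ s.1.fv, Val.optMeasure (s.2 y)

lemma Val.measure_clos (x : String) (e : Exp) (ρ : Env) :
    (Val.clos x e ρ).measure = stateMeasure (Exp.lam x e, ρ) := by
  refine congrArg _ (Finset.sum_congr rfl fun y _ => ?_)
  cases h : ρ y <;> simp [Val.optMeasure, h, Val.measure]

lemma Val.measure_eq (v : Val) : v.measure = stateMeasure v.toState := by
  cases v
  exact Val.measure_clos _ _ _

noncomputable def nodeMeasure (s : State) : NP → ℕ
  | [] => stateMeasure s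
  | y :: _ => Val.optMeasure (s.2 y)

lemma stateMeasure_app_left (e1 e2 : Exp) (ρ : Env) :
    stateMeasure (e1, ρ) < stateMeasure (.app e1 e2, ρ) := by
  have hsum := Finset.sum_le_sum_of_subset (f := fun y => Val.optMeasure (ρ y))
    (Finset.subset_union_left (s₁ := e1.fv) (s₂ := e2.fv))
  have := e2.size_pos
  simp only [stateMeasure, Exp.size, Exp.fv] at *
  omega

lemma stateMeasure_app_right (e1 e2 : Exp) (ρ : Env) :
    stateMeasure (e2, ρ) < stateMeasure (.app e1 e2, ρ) := by
  have hsum := Finset.sum_le_sum_of_subset (f := fun y => Val.optMeasure (ρ y))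
    (Finset.subset_union_right (s₁ := e1.fv) (s₂ := e2.fv))
  have := e1.size_pos
  simp only [stateMeasure, Exp.size, Exp.fv] at *
  omega

lemma optMeasure_lt_measure_clos {x y : String} {e : Exp} {ρ : Env}
    (hy : y ∈ (Exp.lam x e).fv) : Val.optMeasure (ρ y) < (Val.clos x e ρ).measure := by
  have := Finset.single_le_sum (f := fun y => Val.optMeasure (ρ y)) (fun _ _ => Nat.zero_le _) hy
  have := (Exp.lam x e).size_pos
  rw [Val.measure_clos]
  dsimp only [stateMeasure]
  omega

lemma stateMeasure_body_lt {x : String} {e : Exp} {ρ : Env} (v : Val) (hx : x ∉ e.fv) :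
    stateMeasure (e, Env.update ρ x v) < (Val.clos x e ρ).measure := by
  have hfv : (Exp.lam x e).fv = e.fv := by
    simp only [Exp.fv, Finset.sdiff_singleton_eq_erase, Finset.erase_eq_of_notMem hx]
  have hsum : ∑ y ∈ e.fv, Val.optMeasure (Env.update ρ x v y) =
      ∑ y ∈ e.fv, Val.optMeasure (ρ y) :=
    Finset.sum_congr rfl fun y hy => by rw [Env.update, if_neg (ne_of_mem_of_not_mem hy hx)]
  rw [Val.measure_clos, stateMeasure, stateMeasure, hfv, hsum]
  simp only [Exp.size]
  omega

/-- `r.Holds a b`: an arc labelled `r` from a node of measure `a` to a node of measure `b`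
is respected. -/
def Lab.Holds : Lab → ℕ → ℕ → Prop
  | .eq, a, b => b = a
  | .dec, a, b => b < a

lemma Lab.Holds.le {r : Lab} {a b : ℕ} (h : r.Holds a b) : b ≤ a := by
  cases r
  exacts [Nat.le_of_eq h, Nat.le_of_lt h]

def Sound (G : ArcSet) (f g : NP → ℕ) : Prop :=
  ∀ ⦃p r q⦄, (p, r, q) ∈ G → r.Holds (f p) (g q)

section Soundness

variable {G₁ G₂ A B : ArcSet} {s : Set String} {p q y : NP} {f g h : NP → ℕ}

lemma Sound.unionRS (hA : Sound A f g) (hB : Sound B f g) : Sound (unionRS s A B) f g :=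
  fun _ _ _ ha => ha.1.elim (fun h => hA h) (fun h => hB h)

lemma Sound.compA (h₁ : Sound G₁ f g) (h₂ : Sound G₂ g h) : Sound (compA G₁ G₂) f h := by
  intro p r q ha
  obtain ⟨r₁, y, r₂, hp, hq, hr⟩ := exists_path_of_mem_compA ha
  have hp' := h₁ hp
  have hq' := h₂ hq
  cases r
  · obtain ⟨rfl, rfl⟩ := eq_and_eq_of_labelsA_eq (eq_mem_compA.1 ha) hp hq
    exact hq'.trans hp'
  · rcases hr with rfl | rfl
    · exact lt_of_le_of_lt hq'.le hp'
    · exact lt_of_lt_of_le hq' hp'.le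

/-- Sound graphs cannot compose an `=`-path and a `↓`-path between the same nodes. -/
lemma Sound.labelsA_eq_singleton (h₁ : Sound G₁ f g) (h₂ : Sound G₂ g h)
    (hp : (p, .eq, y) ∈ G₁) (hq : (y, .eq, q) ∈ G₂) : labelsA G₁ G₂ p q = {.eq} := by
  refine Set.eq_singleton_iff_unique_mem.2 ⟨mem_labelsA_of_left hp hq, fun r hr => ?_⟩
  cases r
  · rfl
  · have hlt : h q < f p := (h₁.compA h₂) (dec_mem_compA.2 hr)
    have heq : h q = f p := (h₂ hq).trans (h₁ hp)
    omega

end Soundness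

def EvalSound (s : State) (v : Val) (G : ArcSet) : Prop :=
  TargetsIn G (nps ↑v.toExp.fv) ∧ Sound G (nodeMeasure s) (nodeMeasure v.toState)

def CallSound (s s₀ : State) (G : ArcSet) : Prop :=
  TargetsIn G (nps ↑s₀.1.fv) ∧ Sound G (nodeMeasure s) (nodeMeasure s₀)

section PureSoundness

variable {e1 e2 e0 : Exp} {ρ ρ0 : Env} {x : String} {v v2 : Val} {G G1 G2 : ArcSet}

lemma evalSound_value (x : String) (e : Exp) (ρ : Env) :
    EvalSound (.lam x e, ρ) (.clos x e ρ) (idEqS ↑(Exp.lam x e).fv) := by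
  refine ⟨fun ⟨p, r, q⟩ ha => ?_, fun p r q ha => ?_⟩ <;> obtain ⟨rfl, rfl, hp⟩ := mem_idEqS.1 ha
  exacts [hp, rfl]

lemma evalSound_var (h : ρ x = some v) : EvalSound (.var x, ρ) v (varGraphS x ↑v.toExp.fv) := by
  obtain ⟨y, e, ρv⟩ := v
  refine ⟨fun ⟨p, r, q⟩ ha => ?_, fun p r q ha => ?_⟩ <;>
    obtain ⟨rfl, ⟨rfl, rfl⟩ | ⟨rfl, z, hz, rfl⟩⟩ := mem_varGraphS.1 ha
  · exact nil_mem_nps _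
  · exact singleton_mem_nps.2 hz
  · change stateMeasure _ = Val.optMeasure (ρ x)
    rw [h, Val.optMeasure, Val.measure_clos]
    rfl
  · change Val.optMeasure (ρv z) < Val.optMeasure (ρ x)
    rw [h, Val.optMeasure]
    exact optMeasure_lt_measure_clos hz

lemma EvalSound.apply {s s₀ : State} {G' : ArcSet} (hc : CallSound s s₀ G')
    (he : EvalSound s₀ v G) :
    EvalSound s v (compA G' G) :=
  ⟨he.1.compA, hc.2.compA he.2⟩

lemma nodeMeasure_app_left_le (p : NP) :
    nodeMeasure (e1, ρ) p ≤ nodeMeasure (.app e1 e2, ρ) p := by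
  cases p
  exacts [(stateMeasure_app_left e1 e2 ρ).le, le_rfl]

lemma sound_GminusS (h : EvalSound (e1, ρ) (.clos x e0 ρ0) G1) :
    Sound (GminusS x ↑e0.fv G1) (nodeMeasure (.app e1 e2, ρ))
      (nodeMeasure (e0, Env.update ρ0 x v2)) := by
  obtain ⟨htgt, hG1⟩ := h
  have body_node : ∀ {r' p z}, (p, r', [z]) ∈ G1 → nodeMeasure (e0, Env.update ρ0 x v2) [z] =
      nodeMeasure (Val.clos x e0 ρ0).toState [z] := by
    intro r' p z ha
    have hz := singleton_mem_nps.1 (htgt _ ha)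
    simp only [Val.toExp, Exp.fv, Finset.coe_sdiff, Finset.coe_singleton, Set.mem_sdiff,
      Set.mem_singleton_iff] at hz
    simp [nodeMeasure, Env.update, hz.2, Val.toState]
  intro p r q ha
  rcases mem_GminusS.1 ha with ⟨y, z, rfl, rfl, h1⟩ | ⟨rfl, rfl, ⟨z, rfl⟩, r', h1⟩ |
    ⟨hx, rfl, rfl, r', h1⟩
  · rw [body_node h1]
    exact hG1 h1
  · change nodeMeasure _ [z] < stateMeasure _
    rw [body_node h1]
    exact lt_of_le_of_lt (hG1 h1).le (stateMeasure_app_left e1 e2 ρ)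
  · have body_lt := stateMeasure_body_lt v2 (ρ := ρ0) (by simpa using hx)
    rw [Val.measure_eq] at body_lt
    exact lt_of_lt_of_le body_lt ((hG1 h1).le.trans (nodeMeasure_app_left_le p))

lemma sound_GepsS (h : Sound G2 (nodeMeasure (e2, ρ)) (nodeMeasure v2.toState)) :
    Sound (GepsS x G2) (nodeMeasure (.app e1 e2, ρ)) (nodeMeasure (e0, Env.update ρ0 x v2)) := by
  have arg_node : nodeMeasure (e0, Env.update ρ0 x v2) [x] = nodeMeasure v2.toState [] := by
    simp [nodeMeasure, Env.update, Val.optMeasure, Val.measure_eq]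
  intro p r q ha
  obtain ⟨rfl, ⟨y, rfl, h2⟩ | ⟨rfl, rfl, r', h2⟩⟩ := mem_GepsS.1 ha
  · rw [arg_node]
    exact h h2
  · change nodeMeasure _ [x] < stateMeasure _
    rw [arg_node]
    exact lt_of_le_of_lt (h h2).le (stateMeasure_app_right e1 e2 ρ)

lemma callSound_call (h1 : EvalSound (e1, ρ) (.clos x e0 ρ0) G1) (h2 : EvalSound (e2, ρ) v2 G2) :
    CallSound (.app e1 e2, ρ) (e0, Env.update ρ0 x v2) (callGraph x ↑e0.fv G1 G2) :=
  ⟨targetsIn_unionRS, (sound_GminusS h1).unionRS (sound_GepsS h2.2)⟩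

mutual

theorem EvalG.sound {s : State} {v : Val} {G : ArcSet} : EvalG s v G → EvalSound s v G
  | .value x e ρ => evalSound_value x e ρ
  | .var h => evalSound_var h
  | .apply hc he => EvalSound.apply hc.sound he.sound

theorem CallGc.sound {s s₀ : State} {G : ArcSet} : CallGc s s₀ G → CallSound s s₀ G
  | .call h1 h2 => callSound_call h1.sound h2.sound

end

end PureSoundness

section TRelLemmas

variable {S₁ S₂ S' T' S T : Set NP} {G' G : ArcSet} {p q : NP} {r : Lab}

lemma TRel.loop_of_notMem (hT : TRel S' T' S T G' G) (hp : p ∈ S') (hpS : p ∉ S)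
    (ha : (p, r, q) ∈ G') : r = .eq ∧ q = p ∧ p ∉ T := by
  obtain ⟨hloop, hout⟩ := hT.2.2.2 p hp hpS
  have hpq := hloop _ ha rfl
  simp only [Prod.mk.injEq] at hpq
  obtain ⟨-, rfl, rfl⟩ := hpq
  exact ⟨rfl, rfl, hout ha⟩

/-- Were the source new, the arc would be a loop `z =→ z`, with `z` outside `target(G)`. -/
lemma TRel.source_mem_and_mem_of_target_mem (hT : TRel S' T' S T G' G) (hp : p ∈ S')
    (ha : (p, r, q) ∈ G') (hq : q ∈ T) : p ∈ S ∧ (p, r, q) ∈ G := by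
  by_cases hpS : p ∈ S
  · exact ⟨hpS, hT.2.2.1 _ ha hpS hq⟩
  · obtain ⟨-, rfl, hpT⟩ := hT.loop_of_notMem hp hpS ha
    exact absurd hq hpT

lemma TRel.mono_source (hT : TRel S₁ T' S T G' G) (hG' : SourcesIn G' S₁) (hS : S₁ ⊆ S₂) :
    TRel S₂ T' S T G' G := by
  obtain ⟨hsrc, htgt, hres, hnew⟩ := hT
  refine ⟨hsrc.trans hS, htgt, hres, fun z _ hzS => ?_⟩
  by_cases hz : z ∈ S₁
  · exact hnew z hz hzS
  · exact ⟨fun a ha haz => absurd (haz ▸ hG' a ha) hz, fun ha => absurd (hG' _ ha) hz⟩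

end TRelLemmas

section BasicGraphs

variable {S' T' S T : Set String}

lemma TRel_idEqS (hS : S ⊆ S') (hT : T ⊆ T') (hTS : T ⊆ S) :
    TRel (nps S') (nps T') (nps S) (nps T) (idEqS T') (idEqS T) := by
  refine ⟨nps_mono hS, nps_mono hT, fun ⟨p, r, q⟩ ha _ hq => ?_, fun z _ hzS => ⟨?_, ?_⟩⟩
  · obtain ⟨rfl, rfl, -⟩ := mem_idEqS.1 ha
    exact mem_idEqS.2 ⟨rfl, rfl, hq⟩
  · rintro ⟨p, r, q⟩ ha rfl
    obtain ⟨rfl, rfl, -⟩ := mem_idEqS.1 ha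
    rfl
  · exact fun _ hzT => hzS (nps_mono hTS hzT)

lemma TRel_idDecS (hS : S ⊆ S') (hT : T ⊆ T') (hTS : T ⊆ S) :
    TRel (nps S') (nps T') (nps S) (nps T) (idDecS T') (idDecS T) := by
  refine ⟨nps_mono hS, nps_mono hT, fun ⟨p, r, q⟩ ha _ hq => ?_, fun z _ hzS => ⟨?_, ?_⟩⟩
  · obtain ⟨rfl, ⟨rfl, rfl⟩ | ⟨y, -, rfl, rfl⟩⟩ := mem_idDecS.1 ha
    · exact mem_idDecS.2 ⟨rfl, .inl ⟨rfl, rfl⟩⟩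
    · exact mem_idDecS.2 ⟨rfl, .inr ⟨y, singleton_mem_nps.1 hq, rfl, rfl⟩⟩
  · rintro ⟨p, r, q⟩ ha rfl
    obtain ⟨rfl, ⟨rfl, rfl⟩ | ⟨y, -, rfl, rfl⟩⟩ := mem_idDecS.1 ha
    · exact absurd (nil_mem_nps S) hzS
    · rfl
  · exact fun _ hzT => hzS (nps_mono hTS hzT)

lemma TRel_varGraphS {x : String} (hS : S ⊆ S') (hT : T ⊆ T') (hx : x ∈ S) :
    TRel (nps S') (nps T') (nps S) (nps T) (varGraphS x T') (varGraphS x T) := by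
  refine ⟨nps_mono hS, nps_mono hT, fun ⟨p, r, q⟩ ha _ hq => ?_, fun z _ hzS => ⟨?_, ?_⟩⟩
  · obtain ⟨rfl, ⟨rfl, rfl⟩ | ⟨rfl, y, -, rfl⟩⟩ := mem_varGraphS.1 ha
    · exact mem_varGraphS.2 ⟨rfl, .inl ⟨rfl, rfl⟩⟩
    · exact mem_varGraphS.2 ⟨rfl, .inr ⟨rfl, y, singleton_mem_nps.1 hq, rfl⟩⟩
  · rintro ⟨p, r, q⟩ ha rfl
    exact absurd (singleton_mem_nps.2 hx) ((mem_varGraphS.1 ha).1 ▸ hzS)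
  · intro ha
    obtain ⟨rfl, -⟩ := mem_varGraphS.1 ha
    exact absurd (singleton_mem_nps.2 hx) hzS

end BasicGraphs

lemma TRel.compA {S₁' T₁' T₂' S₁ T₁ T₂ : Set NP} {Gc' Gc Gx' Gx : ArcSet} {m₁ m₂ m₃ : NP → ℕ}
    (hc : TRel S₁' T₁' S₁ T₁ Gc' Gc) (hx : TRel T₁' T₂' T₁ T₂ Gx' Gx)
    (hGc' : TargetsIn Gc' T₁') (sc : Sound Gc m₁ m₂) (sx : Sound Gx m₂ m₃) :
    TRel S₁' T₂' S₁ T₂ (compA Gc' Gx') (compA Gc Gx) := by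
  have lift : ∀ {p r₁ y r₂ q}, p ∈ S₁ → q ∈ T₂ → (p, r₁, y) ∈ Gc' → (y, r₂, q) ∈ Gx' →
      (p, r₁, y) ∈ Gc ∧ (y, r₂, q) ∈ Gx := by
    intro p r₁ y r₂ q hp hq h₁ h₂
    obtain ⟨hy, h₂⟩ := hx.source_mem_and_mem_of_target_mem (hGc' _ h₁) h₂ hq
    exact ⟨hc.2.2.1 _ h₁ hp hy, h₂⟩
  have loop : ∀ {z r₁ y r₂ q}, z ∈ S₁' → z ∉ S₁ → (z, r₁, y) ∈ Gc' → (y, r₂, q) ∈ Gx' →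
      r₁ = .eq ∧ r₂ = .eq ∧ q = z ∧ z ∉ T₂ := by
    intro z r₁ y r₂ q hz hzS h₁ h₂
    obtain ⟨rfl, rfl, hzT₁⟩ := hc.loop_of_notMem hz hzS h₁
    obtain ⟨rfl, rfl, hzT₂⟩ := hx.loop_of_notMem (hGc' _ h₁) hzT₁ h₂
    exact ⟨rfl, rfl, rfl, hzT₂⟩
  refine ⟨hc.1, hx.2.1, fun ⟨p, r, q⟩ ha hp hq => ?_, fun z hz hzS => ⟨?_, ?_⟩⟩
  · obtain ⟨r₁, y, r₂, h₁, h₂, hr⟩ := exists_path_of_mem_compA ha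
    obtain ⟨g₁, g₂⟩ := lift hp hq h₁ h₂
    cases r
    · obtain ⟨rfl, rfl⟩ := eq_and_eq_of_labelsA_eq (eq_mem_compA.1 ha) h₁ h₂
      exact eq_mem_compA.2 (sc.labelsA_eq_singleton sx g₁ g₂)
    · rcases hr with rfl | rfl
      exacts [dec_mem_compA.2 (mem_labelsA_of_left g₁ g₂),
        dec_mem_compA.2 (mem_labelsA_of_right g₁ g₂)]
  · rintro ⟨p, r, q⟩ ha rfl
    obtain ⟨r₁, y, r₂, h₁, h₂, hr⟩ := exists_path_of_mem_compA ha
    obtain ⟨rfl, rfl, rfl, -⟩ := loop hz hzS h₁ h₂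
    rcases hr with rfl | rfl <;> rfl
  · intro ha
    obtain ⟨r₁, y, r₂, h₁, h₂, -⟩ := exists_path_of_mem_compA ha
    exact (loop hz hzS h₁ h₂).2.2.2

lemma TRel.callGraph {x : String} {S₁' S₂' T₁' V₂' E₀' S₁ S₂ V₂ E₀ : Set String}
    {G₁' G₁ G₂' G₂ : ArcSet}
    (h₁ : TRel (nps S₁') (nps T₁') (nps S₁) (nps (E₀ \ {x})) G₁' G₁)
    (h₂ : TRel (nps S₂') (nps V₂') (nps S₂) (nps V₂) G₂' G₂)
    (hs₁ : SourcesIn G₁' (nps S₁')) (ht₁ : TargetsIn G₁' (nps T₁'))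
    (hs₂ : SourcesIn G₂' (nps S₂')) (hx : x ∉ T₁') (hE₀ : E₀ ⊆ E₀') :
    TRel (nps (S₁' ∪ S₂')) (nps E₀') (nps (S₁ ∪ S₂)) (nps E₀)
      (callGraph x E₀' G₁' G₂') (callGraph x E₀ G₁ G₂) := by
  have target₁ : ∀ {p r q}, (p, r, q) ∈ G₁' → q ∈ nps E₀ → q ∈ nps (E₀ \ {x}) := by
    intro p r q h hq
    rcases mem_nps.1 hq with rfl | ⟨z, hz, rfl⟩
    · exact nil_mem_nps _
    · have hzT := singleton_mem_nps.1 (ht₁ _ h)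
      exact singleton_mem_nps.2 ⟨hz, fun hzx => hx (hzx ▸ hzT)⟩
  refine ⟨nps_mono (Set.union_subset_union (nps_subset_nps.1 h₁.1) (nps_subset_nps.1 h₂.1)),
    nps_mono hE₀, fun ⟨p, r, q⟩ ha _ hq => ?_, fun z hz hzS => ?_⟩
  · refine mem_callGraph_of_mem hE₀ (fun h hq => ?_) (fun h => ?_) ha hq
    · exact (h₁.source_mem_and_mem_of_target_mem (hs₁ _ h) h (target₁ h hq)).2
    · exact (h₂.source_mem_and_mem_of_target_mem (hs₂ _ h) h (nil_mem_nps _)).2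
  obtain ⟨w, rfl⟩ : ∃ w, z = [w] := by
    rcases mem_nps.1 hz with rfl | ⟨w, -, rfl⟩
    exacts [absurd (nil_mem_nps _) hzS, ⟨w, rfl⟩]
  have hw₁ : [w] ∉ nps S₁ := fun h => hzS (nps_mono Set.subset_union_left h)
  have hw₂ : [w] ∉ nps S₂ := fun h => hzS (nps_mono Set.subset_union_right h)
  have loop : ∀ {r q}, ([w], r, q) ∈ _root_.callGraph x E₀' G₁' G₂' →
      r = .eq ∧ q = [w] ∧ ([w], .eq, [w]) ∈ G₁' := fun ha =>
    loop_of_mem_callGraph (fun h => (h₁.loop_of_notMem (hs₁ _ h) hw₁ h).imp_right And.left)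
      (fun h => List.cons_ne_nil _ _ (h₂.loop_of_notMem (hs₂ _ h) hw₂ h).2.1.symm) ha
  refine ⟨fun ⟨p, r, q⟩ ha hp => ?_, fun ha hE => ?_⟩
  · obtain rfl : p = [w] := hp
    obtain ⟨rfl, rfl, -⟩ := loop ha
    rfl
  · obtain ⟨-, -, h⟩ := loop ha
    exact (h₁.loop_of_notMem (hs₁ _ h) hw₁ h).2.2 (target₁ h hE)

section Simulation

variable {Γ : Grammar}

lemma SRel.deriv {t : StateE} {s : State} (h : SRel Γ t s) : Deriv Γ t.1 s.1 := by
  obtain ⟨hd, -, -⟩ := h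
  exact hd

lemma SRel.deriv_toExp {v' : ValE} {v : Val} (h : SRel Γ v'.toState v.toState) :
    Deriv Γ v'.toExp v.toExp := by
  cases v'; cases v
  exact h.deriv

lemma SRel.of_subset {e' a : ExpE} {e t : Exp} {ρ' : EnvE} {ρ : Env} (h : SRel Γ (e', ρ') (e, ρ))
    (hd : Deriv Γ a t) (ht : t.fv ⊆ e.fv) : SRel Γ (a, ρ') (t, ρ) := by
  obtain ⟨-, henv, hrel⟩ := h
  exact .mk hd (fun y hy => henv y (ht hy)) (fun y hy => hrel y (ht hy))

lemma SRel.exists_prod_of_nt {A : String} {ρ' : EnvE} {s : State} (h : SRel Γ (.nt A, ρ') s) :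
    ∃ b, (A, b) ∈ Γ.prods ∧ (∀ B, b ≠ .nt B) ∧ SRel Γ (b, ρ') s := by
  obtain ⟨hd, henv, hrel⟩ := h
  cases hd with
  | nt hb hd => exact ⟨_, hb, Γ.no_nt_prod _ hb, .mk hd henv hrel⟩

lemma SRel.app_inv {e' : ExpE} {e1 e2 : Exp} {ρ' : EnvE} {ρ : Env}
    (h : SRel Γ (e', ρ') (.app e1 e2, ρ)) (he' : ∀ A, e' ≠ .nt A) :
    ∃ a1 a2, e' = .app a1 a2 ∧ SRel Γ (a1, ρ') (e1, ρ) ∧ SRel Γ (a2, ρ') (e2, ρ) := by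
  have hd := h.deriv
  cases hd with
  | app hd1 hd2 =>
    exact ⟨_, _, rfl, h.of_subset hd1 Finset.subset_union_left,
      h.of_subset hd2 Finset.subset_union_right⟩
  | nt => exact absurd rfl (he' _)

lemma SRel.body {x x' : String} {b' : ExpE} {e0 : Exp} {ρ0' : EnvE} {ρ0 : Env} {v' : ValE}
    {v : Val} (h : SRel Γ (.lam x' b', ρ0') (.lam x e0, ρ0)) (hv : SRel Γ v'.toState v.toState) :
    x = x' ∧ SRel Γ (b', EnvE.update ρ0' x v') (e0, Env.update ρ0 x v) := by
  obtain ⟨hd, henv, hrel⟩ := h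
  cases hd with
  | lam hd =>
    refine ⟨rfl, .mk hd (fun y hy => ?_) (fun y hy w' w hw' hw => ?_)⟩
    · by_cases hyx : y = x
      · simp [hyx, EnvE.update, Env.update]
      · simpa [EnvE.update, Env.update, hyx] using henv y (by simp [Exp.fv, hy, hyx])
    · by_cases hyx : y = x
      · simp only [hyx, EnvE.update, Env.update, if_true, Option.some.injEq] at hw' hw
        exact hw' ▸ hw ▸ hv
      · simp only [EnvE.update, Env.update, hyx, if_false] at hw' hw
        exact hrel y (by simp [Exp.fv, hy, hyx]) w' w hw' hw

variable (Γ) in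
def GraphSim (e' t' : ExpE) (e t : Exp) (G' G : ArcSet) : Prop :=
  TRel (nps (fvE Γ e')) (nps (fvE Γ t')) (nps ↑e.fv) (nps ↑t.fv) G' G ∧
    SourcesIn G' (nps (fvE Γ e')) ∧ TargetsIn G' (nps (fvE Γ t')) ∧ NoConflict G'

section GraphSim

variable {e' t' b : ExpE} {e t : Exp} {G' G : ArcSet}

lemma GraphSim.nt {A : String} (hb : (A, b) ∈ Γ.prods) (h : GraphSim Γ b t' e t G' G) :
    GraphSim Γ (.nt A) t' e t G' G :=
  have hsub := nps_mono (fvE_subset_fvE_nt hb)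
  ⟨h.1.mono_source h.2.1 hsub, h.2.1.mono hsub, h.2.2⟩

lemma GraphSim.compA_idEqS (h : GraphSim Γ b t' e t G' G) : compA (idEqS (fvE Γ b)) G' = G' :=
  _root_.compA_idEqS h.2.1 h.2.2.2

lemma GraphSim.compA {t₀' : ExpE} {t₀ : Exp} {Gx' Gx : ArcSet} {m₁ m₂ m₃ : NP → ℕ}
    (hc : GraphSim Γ e' t₀' e t₀ G' G) (hx : GraphSim Γ t₀' t' t₀ t Gx' Gx)
    (sc : Sound G m₁ m₂) (sx : Sound Gx m₂ m₃) :
    GraphSim Γ e' t' e t (compA G' Gx') (compA G Gx) :=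
  ⟨hc.1.compA hx.1 hc.2.2.1 sc sx, hc.2.1.compA, hx.2.2.1.compA, noConflict_compA _ _⟩

lemma graphSim_idEqS (hd : Deriv Γ e' e) : GraphSim Γ e' e' e e (idEqS (fvE Γ e')) (idEqS ↑e.fv) :=
  ⟨TRel_idEqS hd.fv_subset_fvE hd.fv_subset_fvE le_rfl, sourcesIn_idEqS _, targetsIn_idEqS _,
    noConflict_idEqS _⟩

lemma graphSim_idDecS (hd : Deriv Γ e' e) (ht : Deriv Γ t' t) (hsub' : fvE Γ t' ⊆ fvE Γ e')
    (hsub : t.fv ⊆ e.fv) : GraphSim Γ e' t' e t (idDecS (fvE Γ t')) (idDecS ↑t.fv) :=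
  ⟨TRel_idDecS hd.fv_subset_fvE ht.fv_subset_fvE (Finset.coe_subset.2 hsub),
    (sourcesIn_idDecS _).mono (nps_mono hsub'), targetsIn_idDecS _, noConflict_idDecS _⟩

lemma graphSim_varGraphS {x : String} {v' : ValE} {v : Val} (hv : SRel Γ v'.toState v.toState) :
    GraphSim Γ (.var x) v'.toExp (.var x) v.toExp (varGraphS x (fvE Γ v'.toExp))
      (varGraphS x ↑v.toExp.fv) :=
  have hx : x ∈ (Exp.var x).fv := Finset.mem_singleton_self x
  ⟨TRel_varGraphS (Deriv.var x).fv_subset_fvE hv.deriv_toExp.fv_subset_fvE hx,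
    sourcesIn_varGraphS ((Deriv.var x).fv_subset_fvE hx), targetsIn_varGraphS _ _,
    noConflict_varGraphS _ _⟩

end GraphSim

variable (Γ) in
def EvalSimulated (s : State) (v : Val) (G : ArcSet) : Prop :=
  ∀ e' ρ', SRel Γ (e', ρ') s → ∃ v' G', EvalX Γ (e', ρ') v' G' ∧ SRel Γ v'.toState v.toState ∧
    GraphSim Γ e' v'.toExp s.1 v.toExp G' G

variable (Γ) in
/-- Only starting states that are not a nonterminal are considered; from a nonterminal the call
is preceded by an `→n` step (`CallSimulated.exists_call`). -/
def CallSimulated (k : CKind) (s s₀ : State) (G : ArcSet) : Prop :=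
  ∀ e' ρ', (∀ A, e' ≠ .nt A) → SRel Γ (e', ρ') s → ∃ e₀' ρ₀' G', SRel Γ (e₀', ρ₀') s₀ ∧
    GraphSim Γ e' e₀' s.1 s₀.1 G' G ∧ CallXk Γ k (e', ρ') (e₀', ρ₀') G'

/-- A nonterminal evaluates through one of its productions, and the identity graph of that
`→n` step does not change the graph that follows. -/
lemma evalSimulated_of_not_nt {s : State} {v : Val} {G : ArcSet}
    (h : ∀ e' ρ', (∀ A, e' ≠ .nt A) → SRel Γ (e', ρ') s → ∃ v' G', EvalX Γ (e', ρ') v' G' ∧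
      SRel Γ v'.toState v.toState ∧ GraphSim Γ e' v'.toExp s.1 v.toExp G' G) :
    EvalSimulated Γ s v G := by
  intro e' ρ' hS
  cases e' with
  | nt A =>
    obtain ⟨b, hb, hb', hSb⟩ := hS.exists_prod_of_nt
    obtain ⟨v', G', hE, hSv, hG⟩ := h b ρ' hb' hSb
    have hE' := EvalX.resultN (.gram ρ' hb) hE
    rw [hG.compA_idEqS] at hE'
    exact ⟨v', G', hE', hSv, hG.nt hb⟩
  | _ => exact h _ _ (fun _ => ExpE.noConfusion) hS

lemma CallSimulated.exists_call {k : CKind} {s s₀ : State} {G : ArcSet} {e' : ExpE} {ρ' : EnvE}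
    (hc : CallSimulated Γ k s s₀ G) (hS : SRel Γ (e', ρ') s) :
    ∃ e₀' ρ₀' G', SRel Γ (e₀', ρ₀') s₀ ∧
      TRel (nps (fvE Γ e')) (nps (fvE Γ e₀')) (nps ↑s.1.fv) (nps ↑s₀.1.fv) G' G ∧
      (CallXk Γ k (e', ρ') (e₀', ρ₀') G' ∨
        ∃ sm Gn, CallXn Γ (e', ρ') sm Gn ∧ CallXk Γ k sm (e₀', ρ₀') G' ∧
          SRel Γ sm s ∧ compA Gn G' = G') := by
  cases e' with
  | nt A =>
    obtain ⟨b, hb, hb', hSb⟩ := hS.exists_prod_of_nt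
    obtain ⟨e₀', ρ₀', G', hS₀, hG, hcall⟩ := hc b ρ' hb' hSb
    exact ⟨e₀', ρ₀', G', hS₀, (hG.nt hb).1,
      .inr ⟨(b, ρ'), _, .gram ρ' hb, hcall, hSb, hG.compA_idEqS⟩⟩
  | _ =>
    obtain ⟨e₀', ρ₀', G', hS₀, hG, hcall⟩ := hc _ ρ' (fun _ => ExpE.noConfusion) hS
    exact ⟨e₀', ρ₀', G', hS₀, hG.1, .inl hcall⟩

lemma evalSimulated_value (x : String) (e : Exp) (ρ : Env) :
    EvalSimulated Γ (.lam x e, ρ) (.clos x e ρ) (idEqS ↑(Exp.lam x e).fv) := by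
  refine evalSimulated_of_not_nt fun e' ρ' he' hS => ?_
  have hd := hS.deriv
  cases hd with
  | lam hd => exact ⟨.clos x _ ρ', _, .value x _ ρ', hS, graphSim_idEqS hS.deriv⟩
  | nt => exact absurd rfl (he' _)

lemma evalSimulated_var {ρ : Env} {x : String} {v : Val} (h : ρ x = some v) :
    EvalSimulated Γ (.var x, ρ) v (varGraphS x ↑v.toExp.fv) := by
  refine evalSimulated_of_not_nt fun e' ρ' he' hS => ?_
  obtain ⟨hd, henv, hrel⟩ := hS
  have hx : x ∈ (Exp.var x).fv := Finset.mem_singleton_self x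
  obtain ⟨v', hv'⟩ := Option.isSome_iff_exists.1 (henv x hx).1
  have hSv := hrel x hx v' v hv' h
  cases hd with
  | var => exact ⟨v', _, .var hv', hSv, graphSim_varGraphS hSv⟩
  | nt => exact absurd rfl (he' _)

lemma EvalSimulated.apply {s s₀ : State} {v : Val} {Gc G : ArcSet} (hc : CallGc s s₀ Gc)
    (he : EvalG s₀ v G) (ihc : CallSimulated Γ .c s s₀ Gc) (ihe : EvalSimulated Γ s₀ v G) :
    EvalSimulated Γ s v (compA Gc G) := by
  refine evalSimulated_of_not_nt fun e' ρ' he' hS => ?_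
  obtain ⟨e₀', ρ₀', Gc', hS₀, hGc, hcall⟩ := ihc e' ρ' he' hS
  obtain ⟨v', Gx', hE, hSv, hGx⟩ := ihe e₀' ρ₀' hS₀
  exact ⟨v', compA Gc' Gx', .resultC hcall hE, hSv, hGc.compA hGx hc.sound.2 he.sound.2⟩

lemma callSimulated_call {e1 e2 e0 : Exp} {ρ ρ0 : Env} {x : String} {v2 : Val} {G1 G2 : ArcSet}
    (ih1 : EvalSimulated Γ (e1, ρ) (.clos x e0 ρ0) G1) (ih2 : EvalSimulated Γ (e2, ρ) v2 G2) :
    CallSimulated Γ .c (.app e1 e2, ρ) (e0, Env.update ρ0 x v2) (callGraph x ↑e0.fv G1 G2) := by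
  intro e' ρ' he' hS
  obtain ⟨a1, a2, rfl, hS1, hS2⟩ := hS.app_inv he'
  obtain ⟨⟨x', b', ρ0'⟩, G1', hE1, hSv1, hG1⟩ := ih1 a1 ρ' hS1
  obtain ⟨v2', G2', hE2, hSv2, hG2⟩ := ih2 a2 ρ' hS2
  obtain ⟨hxx, hS₀⟩ := hSv1.body hSv2
  subst hxx
  have hx : x ∉ fvE Γ (.lam x b') := notMem_fvE_lam x b'
  refine ⟨b', EnvE.update ρ0' x v2', _, hS₀, ⟨?_, ?_, targetsIn_unionRS, ?_⟩, .call hE1 hE2⟩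
  · rw [fvE_app hS1.deriv hS2.deriv, Exp.fv, Finset.coe_union]
    have h₁ := hG1.1
    simp only [Val.toExp, ValE.toExp, Exp.fv, Finset.coe_sdiff, Finset.coe_singleton] at h₁
    exact h₁.callGraph hG2.1 hG1.2.1 hG1.2.2.1 hG2.2.1 hx hS₀.deriv.fv_subset_fvE
  · rw [fvE_app hS1.deriv hS2.deriv]
    exact sourcesIn_callGraph (hG1.2.1.mono (nps_mono Set.subset_union_left))
      (hG2.2.1.mono (nps_mono Set.subset_union_right)) (nil_mem_nps _)
  · exact noConflict_callGraph hG1.2.2.1 (singleton_mem_nps.not.2 hx) hG1.2.2.2 hG2.2.2.2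

mutual

theorem EvalG.simulated (Γ : Grammar) {s : State} {v : Val} {G : ArcSet} :
    EvalG s v G → EvalSimulated Γ s v G
  | .value x e ρ => evalSimulated_value x e ρ
  | .var h => evalSimulated_var h
  | .apply hc he => EvalSimulated.apply hc he (hc.simulated Γ) (he.simulated Γ)

theorem CallGc.simulated (Γ : Grammar) {s s₀ : State} {G : ArcSet} :
    CallGc s s₀ G → CallSimulated Γ .c s s₀ G
  | .call h1 h2 => callSimulated_call (h1.simulated Γ) (h2.simulated Γ)

end

lemma callSimulated_oper (e1 e2 : Exp) (ρ : Env) :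
    CallSimulated Γ .r (.app e1 e2, ρ) (e1, ρ) (idDecS ↑e1.fv) := by
  intro e' ρ' he' hS
  obtain ⟨a1, a2, rfl, hS1, hS2⟩ := hS.app_inv he'
  exact ⟨a1, ρ', _, hS1, graphSim_idDecS hS.deriv hS1.deriv
    (fvE_app hS1.deriv hS2.deriv ▸ Set.subset_union_left) Finset.subset_union_left, .oper a1 a2 ρ'⟩

lemma callSimulated_opnd {e1 : Exp} {ρ : Env} {v1 : Val} {G1 : ArcSet} (e2 : Exp)
    (h : EvalG (e1, ρ) v1 G1) : CallSimulated Γ .d (.app e1 e2, ρ) (e2, ρ) (idDecS ↑e2.fv) := by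
  intro e' ρ' he' hS
  obtain ⟨a1, a2, rfl, hS1, hS2⟩ := hS.app_inv he'
  obtain ⟨_, _, hE1, -⟩ := h.simulated Γ a1 ρ' hS1
  exact ⟨a2, ρ', _, hS2, graphSim_idDecS hS.deriv hS2.deriv
    (fvE_app hS1.deriv hS2.deriv ▸ Set.subset_union_right) Finset.subset_union_right,
    .opnd a2 hE1⟩

lemma CallGk.simulated {k : CKind} {s s₀ : State} {G : ArcSet} (h : CallGk k s s₀ G) :
    CallSimulated Γ k s s₀ G := by
  cases k
  · obtain ⟨e1, e2, ρ⟩ := h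
    exact callSimulated_oper e1 e2 ρ
  · obtain ⟨e2, h1⟩ := h
    exact callSimulated_opnd e2 h1
  · exact CallGc.simulated Γ h

end Simulation

/-- Simulation property: evaluations and calls of the pure graph-generating
environment semantics are simulated, from `S`-related states, by the extended
graph-generating environment semantics, with `T`-related size-change graphs;
a pure call may be matched by a single call of the same kind or by an `→n`
call followed by a call of the same kind (whose composite graph has the same
arcs as the second graph). -/
theorem simulation_property (Γ : Grammar) :
    (∀ (e' : ExpE) (ρ' : EnvE) (e : Exp) (ρ : Env) (v : Val) (G : ArcSet),
      SRel Γ (e', ρ') (e, ρ) → EvalG (e, ρ) v G →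
      ∃ (v' : ValE) (G' : ArcSet),
        EvalX Γ (e', ρ') v' G' ∧ SRel Γ v'.toState v.toState ∧
        TRel (nps (fvE Γ e')) (nps (fvE Γ v'.toExp))
             (nps ↑(Exp.fv e)) (nps ↑(Exp.fv v.toExp)) G' G) ∧
    (∀ (k : CKind) (e' : ExpE) (ρ' : EnvE) (e : Exp) (ρ : Env)
       (e0 : Exp) (ρ0 : Env) (G : ArcSet),
      SRel Γ (e', ρ') (e, ρ) → CallGk k (e, ρ) (e0, ρ0) G →
      ∃ (e0' : ExpE) (ρ0' : EnvE) (G' : ArcSet),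
        SRel Γ (e0', ρ0') (e0, ρ0) ∧
        TRel (nps (fvE Γ e')) (nps (fvE Γ e0'))
             (nps ↑(Exp.fv e)) (nps ↑(Exp.fv e0)) G' G ∧
        (CallXk Γ k (e', ρ') (e0', ρ0') G' ∨
          ∃ (s : StateE) (Gn : ArcSet),
            CallXn Γ (e', ρ') s Gn ∧ CallXk Γ k s (e0', ρ0') G' ∧
            SRel Γ s (e, ρ) ∧ compA Gn G' = G')) := by
  refine ⟨fun e' ρ' e ρ v G hS hE => ?_, fun k e' ρ' e ρ e0 ρ0 G hS hC => ?_⟩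
  · obtain ⟨v', G', hE', hSv, hG⟩ := hE.simulated Γ e' ρ' hS
    exact ⟨v', G', hE', hSv, hG.1⟩
  · exact hC.simulated.exists_call hS
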